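/- arXiv:1201.0214 — 7 statements merged into one kernel-verified Lean document; each statement's English description precedes it below -/
import Mathlib

section
/- In the trefoil group G = ⟨u, v ∣ u² = v³⟩ (the presented group on two generators u, v with single relator u²v⁻³), the center of G is exactly the cyclic subgroup generated by the element u² (= v³). -/
/-- The relator set of the trefoil group `G = ⟨u, v ∣ u² = v³⟩`, where
`u` corresponds to `true` and `v` to `false` in the free group on `Bool`. -/
def trefoilRels : Set (FreeGroup Bool) :=
  {FreeGroup.of true ^ 2 * (FreeGroup.of false ^ 3)⁻¹}

/-- The trefoil group `G = ⟨u, v ∣ u² = v³⟩`. -/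
abbrev TrefoilGroup : Type := PresentedGroup trefoilRels

/-!
The element `u² = v³` commutes with both generators, so `⟨u²⟩` is a central subgroup, and
killing it turns the presentation into `⟨u, v ∣ u², v³⟩`, i.e. `G ⧸ ⟨u²⟩ ≃* C₂ ∗ C₃`.
This free product has trivial center: a nontrivial `z` has a reduced word, and for a suitable
letter `a` the reduced words of `a * z` and `z * a` (or of `a * z * a⁻¹` and `z`) begin or end in
different factors, so `a` and `z` do not commute. Hence every central element of `G` maps to `1`
in `C₂ ∗ C₃`, i.e. lies in `⟨u²⟩`.
-/

namespace ZMod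

variable {n : ℕ} {G : Type*} [Group G]

def liftMultiplicative (g : G) (hg : g ^ n = 1) : Multiplicative (ZMod n) →* G :=
  AddMonoidHom.toMultiplicativeLeft
    (ZMod.lift n ⟨zmultiplesHom _ (Additive.ofMul g), by simpa using congrArg Additive.ofMul hg⟩)

@[simp]
theorem liftMultiplicative_ofAdd_one (g : G) (hg : g ^ n = 1) :
    liftMultiplicative g hg (.ofAdd 1) = g := by
  simpa [liftMultiplicative] using
    congrArg Additive.toMul (ZMod.lift_coe n ⟨zmultiplesHom _ (Additive.ofMul g), _⟩ 1)

theorem multiplicative_monoidHom_ext {f₁ f₂ : Multiplicative (ZMod n) →* G}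
    (h : f₁ (.ofAdd 1) = f₂ (.ofAdd 1)) : f₁ = f₂ := by
  refine MonoidHom.ext fun x => ?_
  obtain ⟨k, hk⟩ := ZMod.intCast_surjective x.toAdd
  rw [← ofAdd_toAdd x, ← hk, ← zsmul_one, ofAdd_zsmul, map_zpow, map_zpow, h]

end ZMod

namespace Subgroup

variable {G H : Type*} [Group G] [Group H]

theorem normal_of_le_center {N : Subgroup G} (hN : N ≤ center G) : N.Normal :=
  ⟨fun n hn g => by rwa [mem_center_iff.mp (hN hn) g, mul_inv_cancel_right]⟩

theorem center_le_comap_center {f : G →* H} (hf : Function.Surjective f) :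
    center G ≤ (center H).comap f := by
  intro z hz
  rw [mem_comap, mem_center_iff]
  intro h
  obtain ⟨g, rfl⟩ := hf h
  rw [← map_mul, ← map_mul, mem_center_iff.mp hz g]

end Subgroup

namespace Monoid.CoprodI

variable {ι : Type*} {G : ι → Type*} [∀ i, Group (G i)] [DecidableEq ι] [∀ i, DecidableEq (G i)]

theorem exists_neWord_prod_eq {z : CoprodI G} (hz : z ≠ 1) :
    ∃ (i j : ι) (w : NeWord G i j), w.prod = z := by
  have hw : Word.equiv z ≠ Word.empty := fun h => hz <| by
    rw [← Word.equiv.symm_apply_apply z, h]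
    exact Word.prod_empty
  obtain ⟨i, j, w, hw⟩ := NeWord.of_word _ hw
  exact ⟨i, j, w, by rw [NeWord.prod, hw]; exact Word.equiv.symm_apply_apply z⟩

namespace NeWord

theorem toList_eq_of_prod_eq {i₁ j₁ i₂ j₂ : ι} {w₁ : NeWord G i₁ j₁} {w₂ : NeWord G i₂ j₂}
    (h : w₁.prod = w₂.prod) : w₁.toList = w₂.toList :=
  congrArg Word.toList (Word.equiv.symm.injective h)

theorem fst_eq_of_prod_eq {i₁ j₁ i₂ j₂ : ι} {w₁ : NeWord G i₁ j₁} {w₂ : NeWord G i₂ j₂}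
    (h : w₁.prod = w₂.prod) : i₁ = i₂ := by
  have := w₁.toList_head?
  rw [toList_eq_of_prod_eq h, w₂.toList_head?] at this
  exact (Sigma.mk.inj_iff.mp (Option.some_injective _ this)).1.symm

theorem snd_eq_of_prod_eq {i₁ j₁ i₂ j₂ : ι} {w₁ : NeWord G i₁ j₁} {w₂ : NeWord G i₂ j₂}
    (h : w₁.prod = w₂.prod) : j₁ = j₂ := by
  have := w₁.toList_getLast?
  rw [toList_eq_of_prod_eq h, w₂.toList_getLast?] at this
  exact (Sigma.mk.inj_iff.mp (Option.some_injective _ this)).1.symm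

theorem not_commute_of_fst_eq_snd {i k : ι} (hki : k ≠ i) (w : NeWord G i i) {a : G k}
    (ha : a ≠ 1) : ¬Commute (of a) w.prod := by
  intro hcomm
  let conj : NeWord G k k :=
    ((singleton a ha).append hki w).append hki.symm (singleton a⁻¹ (inv_ne_one.mpr ha))
  have hconj : conj.prod = w.prod := by
    simp only [conj, append_prod, prod_singleton, map_inv, hcomm.eq, mul_inv_cancel_right]
  exact hki (fst_eq_of_prod_eq hconj)

theorem not_commute_of_fst_ne_snd {i j : ι} (hij : i ≠ j) (w : NeWord G i j) {b : G j}
    (hb : b ≠ 1) (hlast : w.last * b ≠ 1) : ¬Commute (of b) w.prod := by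
  intro hcomm
  -- `NeWord` only supports multiplying on the head, so compare the inverses of `b * w` and `w * b`.
  let left : NeWord G j j := ((singleton b hb).append hij.symm w).inv
  have hright : b⁻¹ * w.inv.head ≠ 1 := by
    rwa [inv_head, ← mul_inv_rev, inv_ne_one]
  let right : NeWord G j i := w.inv.mulHead b⁻¹ hright
  have hprod : left.prod = right.prod := by
    simp only [left, right, inv_prod, append_prod, prod_singleton, mulHead_prod, map_inv,
      ← mul_inv_rev, hcomm.eq]
  exact hij (snd_eq_of_prod_eq hprod).symm

end NeWord

end Monoid.CoprodI

open Monoid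

abbrev C2C3Factor (b : Bool) : Type := Multiplicative (ZMod (cond b 2 3))

abbrev C2C3 : Type := CoprodI C2C3Factor

namespace C2C3Factor

def gen (b : Bool) : C2C3Factor b := .ofAdd 1

theorem gen_ne_one (b : Bool) : gen b ≠ 1 := by
  cases b <;> decide

theorem gen_true_pow_two : gen true ^ 2 = 1 := by
  decide

theorem gen_false_pow_three : gen false ^ 3 = 1 := by
  decide

theorem exists_ne_one_and_mul_ne_one (c : C2C3Factor false) :
    ∃ b : C2C3Factor false, b ≠ 1 ∧ c * b ≠ 1 := by
  revert c
  exact (by decide : ∀ c : Multiplicative (ZMod 3), ∃ b, b ≠ 1 ∧ c * b ≠ 1)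

end C2C3Factor

theorem center_C2C3 : Subgroup.center C2C3 = ⊥ := by
  refine (Subgroup.eq_bot_iff_forall _).mpr fun z hz => ?_
  by_contra hz1
  obtain ⟨i, j, w, rfl⟩ := CoprodI.exists_neWord_prod_eq hz1
  have hcomm : ∀ g : C2C3, Commute g w.prod := fun g => Subgroup.mem_center_iff.mp hz g
  match i, j, w with
  | true, true, w | false, false, w =>
    exact CoprodI.NeWord.not_commute_of_fst_eq_snd (Bool.not_ne_self _) w
      (C2C3Factor.gen_ne_one _) (hcomm _)
  | true, false, w =>
    obtain ⟨b, hb, hlast⟩ := C2C3Factor.exists_ne_one_and_mul_ne_one w.last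
    exact CoprodI.NeWord.not_commute_of_fst_ne_snd (by decide) w hb hlast (hcomm _)
  | false, true, w =>
    obtain ⟨b, hb, hlast⟩ := C2C3Factor.exists_ne_one_and_mul_ne_one w.inv.last
    exact CoprodI.NeWord.not_commute_of_fst_ne_snd (by decide) w.inv hb hlast
      (by rw [CoprodI.NeWord.inv_prod]; exact (hcomm _).inv_right)

namespace TrefoilGroup

abbrev u : TrefoilGroup := PresentedGroup.of true

abbrev v : TrefoilGroup := PresentedGroup.of false

theorem u_sq_eq_v_cube : u ^ 2 = v ^ 3 := by
  have h : PresentedGroup.mk trefoilRels (FreeGroup.of true ^ 2 * (FreeGroup.of false ^ 3)⁻¹) = 1 :=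
    (QuotientGroup.eq_one_iff _).mpr (Subgroup.subset_normalClosure rfl)
  rwa [map_mul, map_inv, map_pow, map_pow, mul_inv_eq_one] at h

theorem zpowers_u_sq_le_center : Subgroup.zpowers (u ^ 2) ≤ Subgroup.center TrefoilGroup := by
  rw [Subgroup.zpowers_le, Subgroup.mem_center_iff]
  intro g
  refine Subgroup.mem_centralizer_singleton_iff.mp <|
    PresentedGroup.generated_by trefoilRels _ (fun b => ?_) g
  rw [Subgroup.mem_centralizer_singleton_iff]
  cases b
  · rw [u_sq_eq_v_cube]
    exact (Commute.self_pow v 3).eq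
  · exact (Commute.self_pow u 2).eq

instance : (Subgroup.zpowers (u ^ 2)).Normal :=
  Subgroup.normal_of_le_center zpowers_u_sq_le_center

def toC2C3 : TrefoilGroup →* C2C3 :=
  PresentedGroup.toGroup (f := fun b => CoprodI.of (C2C3Factor.gen b)) <| by
    rintro r rfl
    rw [map_mul, map_inv, map_pow, map_pow, FreeGroup.lift_apply_of, FreeGroup.lift_apply_of,
      ← map_pow, ← map_pow, C2C3Factor.gen_true_pow_two, C2C3Factor.gen_false_pow_three,
      map_one, map_one, inv_one, mul_one]

theorem toC2C3_of (b : Bool) : toC2C3 (PresentedGroup.of b) = CoprodI.of (C2C3Factor.gen b) :=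
  PresentedGroup.toGroup.of _

theorem mk_of_pow_eq_one (b : Bool) :
    ((PresentedGroup.of b : TrefoilGroup) : TrefoilGroup ⧸ Subgroup.zpowers (u ^ 2)) ^
      (cond b 2 3) = 1 := by
  rw [← QuotientGroup.mk_pow, QuotientGroup.eq_one_iff]
  cases b
  · exact u_sq_eq_v_cube ▸ Subgroup.mem_zpowers _
  · exact Subgroup.mem_zpowers _

def ofC2C3 : C2C3 →* TrefoilGroup ⧸ Subgroup.zpowers (u ^ 2) :=
  CoprodI.lift fun b => ZMod.liftMultiplicative _ (mk_of_pow_eq_one b)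

def quotientZPowersEquivC2C3 : TrefoilGroup ⧸ Subgroup.zpowers (u ^ 2) ≃* C2C3 :=
  MonoidHom.toMulEquiv
    (QuotientGroup.lift _ toC2C3 <| by
      rw [Subgroup.zpowers_le, MonoidHom.mem_ker, map_pow, toC2C3_of, ← map_pow,
        C2C3Factor.gen_true_pow_two, map_one])
    ofC2C3
    (QuotientGroup.monoidHom_ext _ <| PresentedGroup.ext fun b => by
      simp [toC2C3_of, ofC2C3, C2C3Factor.gen])
    (CoprodI.ext_hom _ _ fun b => ZMod.multiplicative_monoidHom_ext <| by
      simp [toC2C3_of, ofC2C3, C2C3Factor.gen])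

theorem toC2C3_eq_comp : toC2C3 =
    (quotientZPowersEquivC2C3 : _ →* C2C3).comp (QuotientGroup.mk' (Subgroup.zpowers (u ^ 2))) :=
  rfl

theorem toC2C3_surjective : Function.Surjective toC2C3 := by
  rw [toC2C3_eq_comp]
  exact quotientZPowersEquivC2C3.surjective.comp (QuotientGroup.mk'_surjective _)

theorem ker_toC2C3 : toC2C3.ker = Subgroup.zpowers (u ^ 2) := by
  rw [toC2C3_eq_comp, MonoidHom.ker_mulEquiv_comp, QuotientGroup.ker_mk']

end TrefoilGroup

/-- In the trefoil group `G = ⟨u, v ∣ u² = v³⟩`, the center of `G` is exactly the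
cyclic subgroup generated by the element `u²`. -/
theorem center_trefoilGroup_eq_zpowers :
    Subgroup.center TrefoilGroup =
      Subgroup.zpowers ((PresentedGroup.of (rels := trefoilRels) true) ^ 2) := by
  open TrefoilGroup in
  refine le_antisymm ?_ zpowers_u_sq_le_center
  calc Subgroup.center TrefoilGroup
      ≤ (Subgroup.center C2C3).comap toC2C3 := Subgroup.center_le_comap_center toC2C3_surjective
    _ = Subgroup.zpowers (u ^ 2) := by rw [center_C2C3, MonoidHom.comap_bot, ker_toC2C3]
end

section
/- The quotient of SL(2, ℤ) by its center {±I} (i.e., the group PSL(2, ℤ)) is isomorphic, as a group, to the free product of a cyclic group of order 2 and a cyclic group of order 3. -/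
/-!
In `PSL(2, ℤ)` the images `s` of `S` and `u` of `S T⁻¹` satisfy `s² = u³ = 1`, so they define a
homomorphism `C₂ ∗ C₃ → PSL(2, ℤ)`. It is onto because `S` and `T = (S T⁻¹)⁻¹ S` generate
`SL(2, ℤ)`. It is injective by the ping-pong lemma for the action on `ℍ`: `s`, i.e. `z ↦ -1/z`,
maps the right half-plane `0 < Re z` into the left one, while `u` and `u²`, i.e. `z ↦ -1/(z - 1)`
and `z ↦ 1 - 1/z`, map the left half-plane into the right one.
-/

open Cardinal ModularGroup UpperHalfPlane Pointwise
open scoped MatrixGroups Monoid.Coprod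

namespace Monoid.Coprod

universe u
variable {G H : Type u} [Group G] [Group H]

instance instGroupCond : ∀ b : Bool, Group (cond b H G)
  | true => ‹Group H›
  | false => ‹Group G›

def equivCoprodI : G ∗ H ≃* CoprodI (fun b : Bool => cond b H G) :=
  MonoidHom.toMulEquiv
    (lift (CoprodI.of (M := fun b : Bool => cond b H G) (i := false))
      (CoprodI.of (M := fun b : Bool => cond b H G) (i := true)))
    (CoprodI.lift fun | false => inl | true => inr)
    (by ext <;> simp)
    (by ext (_ | _) <;> simp)

theorem lift_injective_of_ping_pong {K α : Type*} [Group K] [MulAction K α]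
    (f : G →* K) (g : H →* K) (hcard : 3 ≤ #G ∨ 3 ≤ #H) (X Y : Set α)
    (hX : X.Nonempty) (hY : Y.Nonempty) (hXY : Disjoint X Y)
    (hf : ∀ a ≠ 1, f a • Y ⊆ X) (hg : ∀ b ≠ 1, g b • X ⊆ Y) :
    Function.Injective (lift f g) := by
  have hlift : lift f g =
      (CoprodI.lift fun | false => f | true => g).comp equivCoprodI.toMonoidHom := by
    ext <;> simp [equivCoprodI]
  rw [hlift, MonoidHom.coe_comp]
  refine Function.Injective.comp ?_ equivCoprodI.injective
  refine CoprodI.lift_injective_of_ping_pong _ (.inr ?_) (fun | false => X | true => Y)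
    (fun | false => hX | true => hY) ?_ ?_
  · rcases hcard with h | h
    exacts [⟨false, h⟩, ⟨true, h⟩]
  · rintro (_ | _) (_ | _) h
    exacts [(h rfl).elim, hXY, hXY.symm, (h rfl).elim]
  · rintro (_ | _) (_ | _) h
    exacts [(h rfl).elim, hf, hg, (h rfl).elim]

end Monoid.Coprod

section zmodPowersHom

variable {G : Type*} [Group G] {n : ℕ}

def zmodPowersHom (g : G) (hg : g ^ n = 1) : Multiplicative (ZMod n) →* G :=
  AddMonoidHom.toMultiplicativeLeft <|
    ZMod.lift n ⟨zmultiplesHom _ (Additive.ofMul g), by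
      rw [zmultiplesHom_apply, natCast_zsmul, ← ofMul_pow, hg, ofMul_one]⟩

theorem zmodPowersHom_ofAdd_natCast (g : G) (hg : g ^ n = 1) (k : ℕ) :
    zmodPowersHom g hg (Multiplicative.ofAdd (k : ZMod n)) = g ^ k := by
  rw [← Int.cast_natCast (R := ZMod n), zmodPowersHom,
    AddMonoidHom.toMultiplicativeLeft_apply_apply, toAdd_ofAdd, ZMod.lift_coe]
  simp

@[simp]
theorem zmodPowersHom_ofAdd_one (g : G) (hg : g ^ n = 1) :
    zmodPowersHom g hg (Multiplicative.ofAdd 1) = g := by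
  simpa using zmodPowersHom_ofAdd_natCast g hg 1

theorem exists_zmodPowersHom_eq_pow_of_ne_one [NeZero n] (g : G) (hg : g ^ n = 1)
    {a : Multiplicative (ZMod n)} (ha : a ≠ 1) :
    ∃ k, 0 < k ∧ k < n ∧ zmodPowersHom g hg a = g ^ k := by
  refine ⟨(a.toAdd).val, Nat.pos_of_ne_zero ?_, ZMod.val_lt _, ?_⟩
  · rwa [ne_eq, ZMod.val_eq_zero, ← ofAdd_eq_one, ofAdd_toAdd]
  · rw [← zmodPowersHom_ofAdd_natCast, ZMod.natCast_zmod_val, ofAdd_toAdd]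

end zmodPowersHom

theorem Matrix.SpecialLinearGroup.map_mem_center {n R S : Type*} [DecidableEq n] [Fintype n]
    [CommRing R] [CommRing S] (f : R →+* S) {A : SpecialLinearGroup n R}
    (hA : A ∈ Subgroup.center _) : map f A ∈ Subgroup.center _ := by
  obtain ⟨r, hr, hrA⟩ := mem_center_iff.mp hA
  refine mem_center_iff.mpr ⟨f r, by rw [← map_pow, hr, map_one], ?_⟩
  simp [← hrA]

namespace Matrix.ProjectiveSpecialLinearGroup

noncomputable def intToPGL : PSL(2, ℤ) →* PGL(2, ℝ) :=
  QuotientGroup.lift _ (SpecialLinearGroup.toPGL.comp (SpecialLinearGroup.map (algebraMap ℤ ℝ)))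
    fun _ hA ↦ by
      rw [MonoidHom.mem_ker, MonoidHom.comp_apply, ← MonoidHom.mem_ker,
        SpecialLinearGroup.toPGL_ker]
      exact SpecialLinearGroup.map_mem_center _ hA

noncomputable instance : MulAction PSL(2, ℤ) ℍ := MulAction.compHom ℍ intToPGL

theorem coe_smul (A : SL(2, ℤ)) (z : ℍ) : (A : PSL(2, ℤ)) • z = A • z := rfl

end Matrix.ProjectiveSpecialLinearGroup

namespace ModularGroup

variable {z : ℍ}

theorem re_S_smul (z : ℍ) : (S • z).re = -z.re / Complex.normSq z := by
  rw [modular_S_smul]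
  simp [Complex.inv_re, neg_div]

theorem re_S_smul_neg (hz : 0 < z.re) : (S • z).re < 0 := by
  rw [re_S_smul]
  exact div_neg_of_neg_of_pos (neg_neg_of_pos hz) (Complex.normSq_pos.mpr z.ne_zero)

theorem re_S_smul_pos (hz : z.re < 0) : 0 < (S • z).re := by
  rw [re_S_smul]
  exact div_pos (neg_pos.mpr hz) (Complex.normSq_pos.mpr z.ne_zero)

theorem re_S_mul_T_inv_smul_pos (hz : z.re < 0) : 0 < ((S * T⁻¹) • z).re := by
  rw [mul_smul]
  exact re_S_smul_pos (by rw [re_T_inv_smul]; linarith)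

theorem re_S_mul_T_inv_sq_smul_pos (hz : z.re < 0) : 0 < ((S * T⁻¹) ^ 2 • z).re := by
  rw [show (S * T⁻¹) ^ 2 = -(T * S) by decide, SL_neg_smul, mul_smul, re_T_smul]
  linarith [re_S_smul_pos hz]

theorem PSL2Z_generators : Subgroup.closure {(S : PSL(2, ℤ)), (T : PSL(2, ℤ))} = ⊤ := by
  rw [← QuotientGroup.coe_mk', ← Set.image_pair, ← MonoidHom.map_closure,
    SpecialLinearGroup.SL2Z_generators, ← MonoidHom.range_eq_map, QuotientGroup.range_mk']

theorem coe_S_pow_two : (S : PSL(2, ℤ)) ^ 2 = 1 := by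
  rw [← QuotientGroup.mk_pow, show S ^ 2 = -1 by decide, QuotientGroup.eq_one_iff]
  exact Subgroup.mem_center_iff.mpr fun _ ↦ by simp

theorem coe_S_mul_T_inv_pow_three : ((S * T⁻¹ : SL(2, ℤ)) : PSL(2, ℤ)) ^ 3 = 1 := by
  rw [← QuotientGroup.mk_pow, show (S * T⁻¹) ^ 3 = 1 by decide, QuotientGroup.mk_one]

noncomputable def coprodToPSL : Multiplicative (ZMod 2) ∗ Multiplicative (ZMod 3) →* PSL(2, ℤ) :=
  Monoid.Coprod.lift (zmodPowersHom _ coe_S_pow_two) (zmodPowersHom _ coe_S_mul_T_inv_pow_three)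

theorem range_coprodToPSL : coprodToPSL.range = ⊤ := by
  have hS : (S : PSL(2, ℤ)) ∈ coprodToPSL.range :=
    ⟨.inl (.ofAdd 1), by simp [coprodToPSL]⟩
  have hST : ((S * T⁻¹ : SL(2, ℤ)) : PSL(2, ℤ)) ∈ coprodToPSL.range :=
    ⟨.inr (.ofAdd 1), by simp [coprodToPSL]⟩
  have hT : (T : PSL(2, ℤ)) = ((S * T⁻¹ : SL(2, ℤ)) : PSL(2, ℤ))⁻¹ * S := by
    rw [← QuotientGroup.mk_inv, ← QuotientGroup.mk_mul, mul_inv_rev, inv_inv,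
      inv_mul_cancel_right]
  rw [eq_top_iff, ← PSL2Z_generators, Subgroup.closure_le]
  rintro _ (rfl | rfl)
  · exact hS
  · rw [hT]
    exact mul_mem (inv_mem hST) hS

theorem coprodToPSL_injective : Function.Injective coprodToPSL := by
  refine Monoid.Coprod.lift_injective_of_ping_pong _ _ (.inr (by simp)) {z : ℍ | z.re < 0}
    {z : ℍ | 0 < z.re} ⟨T⁻¹ • I, show (T⁻¹ • I).re < 0 by rw [re_T_inv_smul, I_re]; norm_num⟩
    ⟨T • I, show 0 < (T • I).re by rw [re_T_smul, I_re]; norm_num⟩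
    (Set.disjoint_left.mpr fun z (h₁ : z.re < 0) (h₂ : 0 < z.re) ↦ lt_asymm h₁ h₂) ?_ ?_
  · intro a ha
    obtain ⟨k, hk₀, hk, hak⟩ := exists_zmodPowersHom_eq_pow_of_ne_one _ coe_S_pow_two ha
    obtain rfl : k = 1 := by omega
    rw [hak, pow_one, Set.smul_set_subset_iff]
    intro z hz
    rw [Matrix.ProjectiveSpecialLinearGroup.coe_smul]
    exact re_S_smul_neg hz
  · intro b hb
    obtain ⟨k, hk₀, hk, hbk⟩ :=
      exists_zmodPowersHom_eq_pow_of_ne_one _ coe_S_mul_T_inv_pow_three hb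
    rw [hbk, ← QuotientGroup.mk_pow, Set.smul_set_subset_iff]
    intro z hz
    rw [Matrix.ProjectiveSpecialLinearGroup.coe_smul]
    interval_cases k
    · rw [pow_one]
      exact re_S_mul_T_inv_smul_pos hz
    · exact re_S_mul_T_inv_sq_smul_pos hz

end ModularGroup

/-- The quotient of `SL(2, ℤ)` by its center `{±I}`, i.e. the group `PSL(2, ℤ)`,
is isomorphic to the free product of a cyclic group of order 2 and a cyclic group
of order 3. -/
theorem psl2z_iso_coprod_c2_c3 :
    Nonempty
      ((Matrix.SpecialLinearGroup (Fin 2) ℤ ⧸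
          Subgroup.center (Matrix.SpecialLinearGroup (Fin 2) ℤ)) ≃*
        Monoid.Coprod (Multiplicative (ZMod 2)) (Multiplicative (ZMod 3))) :=
  ⟨(MulEquiv.ofBijective ModularGroup.coprodToPSL
    ⟨ModularGroup.coprodToPSL_injective,
      MonoidHom.range_eq_top.mp ModularGroup.range_coprodToPSL⟩).symm⟩
end

section
/- There exists R > 0 such that for every point p = (x, y, z) ∈ ℝ³ with ‖p − c‖ ≥ R, where c = (0, 0, 38), the Euclidean inner product ⟨F(p), p − c⟩ is strictly negative. (Explicitly, ⟨F(p), p − c⟩ = −10x² − y² − (8/3)z² + (304/3)z, which is negative outside a bounded ball centered at c.) -/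
open RealInnerProductSpace

/-- The Lorenz vector field `F(x, y, z) = (10(y − x), 28x − y − xz, xy − (8/3)z)`
on `ℝ³` (with classical parameters σ = 10, ρ = 28, β = 8/3). -/
noncomputable def lorenzField (p : EuclideanSpace ℝ (Fin 3)) : EuclideanSpace ℝ (Fin 3) :=
  (WithLp.equiv 2 (Fin 3 → ℝ)).symm
    ![10 * (p 1 - p 0), 28 * p 0 - p 1 - p 0 * p 2, p 0 * p 1 - (8 / 3) * p 2]

/-- The center `c = (0, 0, 38)` of Lorenz's trapping ball. -/
noncomputable def lorenzCenter : EuclideanSpace ℝ (Fin 3) :=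
  (WithLp.equiv 2 (Fin 3 → ℝ)).symm ![0, 0, 38]

/-!
In the coordinates `v = p − c` centred at `c = (0, 0, 38)` the cubic terms of `⟨F(p), p − c⟩`
cancel, leaving `−10 v₀² − v₁² − (8/3) v₂² − (304/3) v₂`. The quadratic part is at most
`−‖v‖²` and the linear part at most `(304/3) ‖v‖`, so the inner product is negative as soon
as `‖v‖ > 304/3`.
-/

theorem EuclideanSpace.norm_sq_eq_fin_three (v : EuclideanSpace ℝ (Fin 3)) :
    ‖v‖ ^ 2 = v 0 ^ 2 + v 1 ^ 2 + v 2 ^ 2 := by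
  simp only [EuclideanSpace.norm_sq_eq, Fin.sum_univ_three, Real.norm_eq_abs, sq_abs]

theorem inner_lorenzField_add_lorenzCenter (v : EuclideanSpace ℝ (Fin 3)) :
    ⟪lorenzField (v + lorenzCenter), v⟫ =
      -10 * v 0 ^ 2 - v 1 ^ 2 - 8 / 3 * v 2 ^ 2 - 304 / 3 * v 2 := by
  simp only [lorenzField, lorenzCenter, WithLp.equiv_symm_apply, PiLp.add_apply,
    Matrix.cons_val_one, Matrix.cons_val_zero, add_zero, Matrix.cons_val, PiLp.inner_apply,
    RCLike.inner_apply, Real.ringHom_apply, Fin.sum_univ_three]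
  ring

theorem inner_lorenzField_add_lorenzCenter_le (v : EuclideanSpace ℝ (Fin 3)) :
    ⟪lorenzField (v + lorenzCenter), v⟫ ≤ ‖v‖ * (304 / 3 - ‖v‖) := by
  have hquad : -10 * v 0 ^ 2 - v 1 ^ 2 - 8 / 3 * v 2 ^ 2 ≤ -‖v‖ ^ 2 := by
    rw [EuclideanSpace.norm_sq_eq_fin_three]
    nlinarith [sq_nonneg (v 0), sq_nonneg (v 2)]
  have hlin : -v 2 ≤ ‖v‖ :=
    (neg_le_abs (v 2)).trans (by simpa using PiLp.norm_apply_le v 2)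
  rw [inner_lorenzField_add_lorenzCenter]
  linarith

/-- There exists `R > 0` such that at every point `p` with `‖p − c‖ ≥ R`, where
`c = (0, 0, 38)`, the Lorenz vector field points strictly inward:
`⟨F(p), p − c⟩ < 0`. -/
theorem lorenzField_inner_neg_outside_ball :
    ∃ R > (0 : ℝ), ∀ p : EuclideanSpace ℝ (Fin 3),
      R ≤ ‖p - lorenzCenter‖ → ⟪lorenzField p, p - lorenzCenter⟫ < 0 := by
  refine ⟨102, by norm_num, fun p hR => ?_⟩
  calc ⟪lorenzField p, p - lorenzCenter⟫
      = ⟪lorenzField (p - lorenzCenter + lorenzCenter), p - lorenzCenter⟫ := by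
        rw [sub_add_cancel]
    _ ≤ ‖p - lorenzCenter‖ * (304 / 3 - ‖p - lorenzCenter‖) :=
        inner_lorenzField_add_lorenzCenter_le _
    _ < 0 := mul_neg_of_pos_of_neg (by linarith) (by linarith)
end

section
/- There exists R > 0 with the following property: if f : ℝ → ℝ³ is differentiable and satisfies f′(t) = F(f(t)) for all t (i.e., f is a solution of the Lorenz system), and if ‖f(t₀) − c‖ ≤ R for some t₀, where c = (0, 0, 38), then ‖f(t) − c‖ ≤ R for all t ≥ t₀. That is, the closed ball of radius R about c is forward invariant under the Lorenz flow. -/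
/-! The squared distance `V = ‖p - c‖²` to `c = (0, 0, 38)` changes along a solution at rate
`2⟪p - c, F p⟫`, and the cubic terms of this inner product cancel, leaving the concave quadratic
`-10x² - y² - (8/3)z² + (304/3)z`. On the sphere `V = 40²` it is negative, so no solution can
leave the ball through its boundary. -/

theorem norm_sub_le_of_inner_field_neg_on_sphere {E : Type*} [NormedAddCommGroup E]
    [InnerProductSpace ℝ E] {F : E → E} {c : E} {R : ℝ}
    (hF : ∀ p, ‖p - c‖ = R → inner ℝ (p - c) (F p) < 0)
    {f : ℝ → E} (hf : ∀ t, HasDerivAt f (F (f t)) t) {t₀ : ℝ} (h₀ : ‖f t₀ - c‖ ≤ R)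
    {t : ℝ} (ht : t₀ ≤ t) : ‖f t - c‖ ≤ R := by
  have hR : 0 ≤ R := (norm_nonneg _).trans h₀
  have hV : ∀ s, HasDerivAt (‖f · - c‖ ^ 2) (2 * inner ℝ (f s - c) (F (f s))) s :=
    fun s => ((hf s).sub_const c).norm_sq
  have hsq : ‖f t - c‖ ^ 2 ≤ R ^ 2 := by
    refine image_le_of_deriv_right_lt_deriv_boundary' (B := fun _ => R ^ 2) (B' := 0)
      (fun s _ => (hV s).continuousAt.continuousWithinAt) (fun s _ => (hV s).hasDerivWithinAt)
      (by gcongr) continuousOn_const (fun s _ => hasDerivWithinAt_const _ _ _) ?_ ⟨ht, le_rfl⟩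
    intro s _ hs
    have := hF (f s) (by rwa [sq_eq_sq₀ (norm_nonneg _) hR] at hs)
    simp only [Pi.zero_apply]
    linarith
  exact (sq_le_sq₀ (norm_nonneg _) hR).1 hsq

theorem norm_sub_lorenzCenter_sq (p : EuclideanSpace ℝ (Fin 3)) :
    ‖p - lorenzCenter‖ ^ 2 = p 0 ^ 2 + p 1 ^ 2 + (p 2 - 38) ^ 2 := by
  simp [EuclideanSpace.norm_sq_eq, Fin.sum_univ_three, lorenzCenter]

theorem inner_sub_lorenzCenter_lorenzField (p : EuclideanSpace ℝ (Fin 3)) :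
    inner ℝ (p - lorenzCenter) (lorenzField p) =
      -10 * p 0 ^ 2 - p 1 ^ 2 - 8 / 3 * p 2 ^ 2 + 304 / 3 * p 2 := by
  simp [PiLp.inner_apply, Fin.sum_univ_three, lorenzField, lorenzCenter]
  ring

theorem inner_sub_lorenzCenter_lorenzField_neg {p : EuclideanSpace ℝ (Fin 3)}
    (hp : ‖p - lorenzCenter‖ = 40) : inner ℝ (p - lorenzCenter) (lorenzField p) < 0 := by
  have hsphere := norm_sub_lorenzCenter_sq p
  rw [hp] at hsphere
  rw [inner_sub_lorenzCenter_lorenzField]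
  -- on the sphere the inner product is `-9x² - (5/3)(z - 38/5)² + 1444/15 - 156`
  nlinarith [sq_nonneg (p 0), sq_nonneg (p 2 - 38 / 5)]

/-- There exists `R > 0` such that the closed ball of radius `R` about
`c = (0, 0, 38)` is forward invariant under the Lorenz flow: every solution
`f` of the Lorenz system that satisfies `‖f(t₀) − c‖ ≤ R` at some time `t₀`
satisfies `‖f(t) − c‖ ≤ R` for all `t ≥ t₀`. -/
theorem lorenz_ball_forward_invariant :
    ∃ R > (0 : ℝ), ∀ f : ℝ → EuclideanSpace ℝ (Fin 3),
      (∀ t : ℝ, HasDerivAt f (lorenzField (f t)) t) →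
      ∀ t₀ : ℝ, ‖f t₀ - lorenzCenter‖ ≤ R →
      ∀ t : ℝ, t₀ ≤ t → ‖f t - lorenzCenter‖ ≤ R :=
  ⟨40, by norm_num, fun _ hf _ h₀ _ ht =>
    norm_sub_le_of_inner_field_neg_on_sphere
      (fun _ => inner_sub_lorenzCenter_lorenzField_neg) hf h₀ ht⟩
end

section
/- There exists R > 0 such that every solution of the Lorenz system is ultimately trapped in the ball of radius R about c = (0, 0, 38): if f : ℝ → ℝ³ is differentiable with f′(t) = F(f(t)) for all t, then there exists T such that ‖f(t) − c‖ ≤ R for all t ≥ T. -/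
/-!
With `c = (0, 0, 38)` the cubic terms and the `xy` cross terms of `⟪p - c, F p⟫` cancel, leaving
`-10x² - y² - (8/3)z² + (304/3)z`, which is at most `-‖p - c‖² + 1550`. Hence `V = ‖f - c‖²`
satisfies `V' ≤ -2V + 3100`, so `(V - 1550) e^{2t}` is antitone and `V ≤ 1550 + O(e^{-2t}) < 40²`.
-/

open Filter Real Topology

section DifferentialInequality

variable {V V' : ℝ → ℝ} {a b : ℝ}

theorem antitone_sub_div_mul_exp_of_hasDerivAt_le (ha : 0 < a)
    (hV : ∀ t, HasDerivAt V (V' t) t) (hle : ∀ t, V' t ≤ -a * V t + b) :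
    Antitone fun t => (V t - b / a) * exp (a * t) := by
  refine antitone_of_hasDerivAt_nonpos (fun t => ((hV t).sub_const _).mul
    ((hasDerivAt_const_mul a).exp)) fun t => ?_
  have hderiv : V' t + a * (V t - b / a) ≤ 0 := by
    rw [mul_sub, mul_div_cancel₀ _ ha.ne']
    linarith [hle t]
  calc V' t * exp (a * t) + (V t - b / a) * (exp (a * t) * a)
      = (V' t + a * (V t - b / a)) * exp (a * t) := by ring
    _ ≤ 0 := mul_nonpos_of_nonpos_of_nonneg hderiv (exp_pos _).le

theorem eventually_le_div_add_of_hasDerivAt_le (ha : 0 < a)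
    (hV : ∀ t, HasDerivAt V (V' t) t) (hle : ∀ t, V' t ≤ -a * V t + b) {ε : ℝ} (hε : 0 < ε) :
    ∀ᶠ t in atTop, V t ≤ b / a + ε := by
  set C := (V 0 - b / a) * exp (a * 0)
  have hdecay : Tendsto (fun t => C * exp (-(a * t))) atTop (𝓝 0) := by
    simpa using (tendsto_exp_atBot.comp
      (tendsto_neg_atTop_atBot.comp (tendsto_id.const_mul_atTop ha))).const_mul C
  filter_upwards [hdecay.eventually (gt_mem_nhds hε), eventually_ge_atTop 0] with t hsmall ht
  have hmono := antitone_sub_div_mul_exp_of_hasDerivAt_le ha hV hle ht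
  have : V t - b / a ≤ C * exp (-(a * t)) := by
    rw [exp_neg, ← div_eq_mul_inv, le_div_iff₀ (exp_pos _)]
    exact hmono
  linarith

end DifferentialInequality

open scoped RealInnerProductSpace

theorem lorenz_inner_sub_center_le (p : EuclideanSpace ℝ (Fin 3)) :
    2 * ⟪p - lorenzCenter, lorenzField p⟫ ≤ -2 * ‖p - lorenzCenter‖ ^ 2 + 3100 := by
  rw [← real_inner_self_eq_norm_sq]
  simp only [PiLp.inner_apply, Fin.sum_univ_three, lorenzField, lorenzCenter, PiLp.sub_apply,
    WithLp.equiv_symm_apply, Matrix.cons_val_zero, Matrix.cons_val_one,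
    Matrix.cons_val_two, Matrix.head_cons, Matrix.tail_cons, RCLike.inner_apply, conj_trivial]
  nlinarith [sq_nonneg (p 0), sq_nonneg (p 2 - 38 / 5)]

/-- There exists `R > 0` such that every solution of the Lorenz system is
ultimately trapped in the ball of radius `R` about `c = (0, 0, 38)`: for every
solution `f` there is a time `T` with `‖f(t) − c‖ ≤ R` for all `t ≥ T`. -/
theorem lorenz_solutions_ultimately_trapped :
    ∃ R > (0 : ℝ), ∀ f : ℝ → EuclideanSpace ℝ (Fin 3),
      (∀ t : ℝ, HasDerivAt f (lorenzField (f t)) t) →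
      ∃ T : ℝ, ∀ t : ℝ, T ≤ t → ‖f t - lorenzCenter‖ ≤ R := by
  refine ⟨40, by norm_num, fun f hf => ?_⟩
  have hV (t : ℝ) : HasDerivAt (fun s => ‖f s - lorenzCenter‖ ^ 2)
      (2 * ⟪f t - lorenzCenter, lorenzField (f t)⟫) t :=
    ((hf t).sub_const _).norm_sq
  obtain ⟨T, hT⟩ := eventually_atTop.1 <|
    eventually_le_div_add_of_hasDerivAt_le two_pos hV
      (fun t => lorenz_inner_sub_center_le (f t)) one_pos
  refine ⟨T, fun t ht => ?_⟩
  nlinarith [hT t ht, norm_nonneg (f t - lorenzCenter)]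
end

section
/- Let n ≥ 2 and let w : ℤ/nℤ → {L, R} be an aperiodic cyclic word, ordered by L < R, and order length-n words lexicographically. Then for every i ∈ ℤ/nℤ, the rotation rot_i(w) is lexicographically smaller than the rotation rot_{i+1}(w) if and only if w(i) = L. Equivalently, in the lexicographic ranking of the n rotations, the rank of rot_i is less than the rank of rot_{i+1} exactly when w(i) = L. -/
/-- A binary cyclic word of length `n` is a function `w : ℤ/nℤ → Bool`, where we
identify the letter `L` with `false` and the letter `R` with `true` (so that
`L < R` in the order on `Bool`).  `CyclicWord.rot n w i` is the rotation
`(w(i), w(i+1), …, w(i+n−1))` of `w` starting at position `i`, as a word of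
length `n`. -/
def CyclicWord.rot (n : ℕ) (w : ZMod n → Bool) (i : ZMod n) : Fin n → Bool :=
  fun k => w (i + (k : ℕ))

/-- A cyclic word `w : ℤ/nℤ → Bool` is aperiodic if there is no `d` with
`0 < d < n` such that `w(j + d) = w(j)` for all `j`. -/
def CyclicWord.Aperiodic (n : ℕ) (w : ZMod n → Bool) : Prop :=
  ∀ d : ℕ, 0 < d → d < n → ∃ j : ZMod n, w (j + (d : ℕ)) ≠ w j

/-- Strict lexicographic order on words of length `n` (with letters ordered by
`L = false < true = R`): `a` is lexicographically smaller than `b` if they agree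
before some position `k` and `a k < b k`. -/
def CyclicWord.lexLt {n : ℕ} (a b : Fin n → Bool) : Prop :=
  ∃ k : Fin n, (∀ j : Fin n, j < k → a j = b j) ∧ a k < b k

/-
Aperiodicity with period 1 makes `rot_i` and `rot_{i+1}` differ; let `k` be the first position
where they do. Agreement before `k` says `w(i+j) = w(i+j+1)` for `j < k`, so `w(i+k) = w(i)`,
and then `w(i+1+k) ≠ w(i)`. Hence `rot_i < rot_{i+1}` exactly when `w(i) = L`.
-/

theorem Bool.lt_iff_eq_false_of_ne {x y : Bool} (h : x ≠ y) : x < y ↔ x = false := by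
  cases x <;> cases y <;> simp_all

theorem exists_forall_lt_eq_and_ne {ι α : Type*} [LinearOrder ι] [WellFoundedLT ι]
    {a b : ι → α} (h : a ≠ b) :
    ∃ k, (∀ j < k, a j = b j) ∧ a k ≠ b k := by
  obtain ⟨k, hne, hmin⟩ :=
    wellFounded_lt.has_min {k | a k ≠ b k} (Function.ne_iff.mp h)
  exact ⟨k, fun j hj => not_not.mp fun hj' => hmin j hj' hj, hne⟩

theorem Nat.apply_eq_apply_zero_of_forall_lt {α : Type*} {f : ℕ → α} {m : ℕ}
    (h : ∀ j < m, f j = f (j + 1)) : f m = f 0 := by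
  induction m with
  | zero => rfl
  | succ m ih =>
    rw [← h m m.lt_succ_self, ih fun j hj => h j (hj.trans m.lt_succ_self)]

namespace CyclicWord

variable {n : ℕ}

theorem lexLt_iff_of_forall_lt_eq {a b : Fin n → Bool} {k : Fin n}
    (hagree : ∀ j < k, a j = b j) (hne : a k ≠ b k) : lexLt a b ↔ a k < b k := by
  refine ⟨fun ⟨l, hagree', hlt⟩ => ?_, fun hlt => ⟨k, hagree, hlt⟩⟩
  rcases lt_trichotomy l k with hlk | rfl | hkl
  · exact absurd (hagree l hlk) hlt.ne
  · exact hlt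
  · exact absurd (hagree' k hkl) hne

theorem Aperiodic.rot_ne_rot_add_one {w : ZMod n → Bool} (hw : Aperiodic n w) (hn : 2 ≤ n)
    (i : ZMod n) : rot n w i ≠ rot n w (i + 1) := by
  have : NeZero n := ⟨by omega⟩
  obtain ⟨j, hj⟩ := hw 1 one_pos (by omega)
  intro h
  have hk := congrFun h ⟨(j - i).val, (j - i).val_lt⟩
  simp only [rot, ZMod.natCast_val, ZMod.cast_id', id, add_sub_cancel, add_right_comm i 1] at hk
  exact hj (by simpa using hk.symm)

theorem rot_eq_self_of_forall_lt_eq_rot_add_one {w : ZMod n → Bool} {i : ZMod n} {k : Fin n}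
    (hagree : ∀ j < k, rot n w i j = rot n w (i + 1) j) : rot n w i k = w i := by
  have hstep : ∀ j < (k : ℕ), w (i + (j : ℕ)) = w (i + ((j + 1 : ℕ) : ZMod n)) := by
    intro j hj
    have := hagree ⟨j, hj.trans k.isLt⟩ hj
    simpa only [rot, Nat.cast_add, Nat.cast_one, add_comm (j : ZMod n), add_assoc] using this
  simpa [rot] using
    Nat.apply_eq_apply_zero_of_forall_lt (f := fun j : ℕ => w (i + (j : ZMod n))) hstep

end CyclicWord

/-- For an aperiodic binary cyclic word `w` of length `n ≥ 2`, the rotation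
starting at position `i` is lexicographically smaller than the rotation starting
at position `i + 1` if and only if the letter `w(i)` is `L` (= `false`). -/
theorem CyclicWord.rot_lexLt_rot_succ_iff (n : ℕ) (hn : 2 ≤ n)
    (w : ZMod n → Bool) (hw : CyclicWord.Aperiodic n w) :
    ∀ i : ZMod n,
      CyclicWord.lexLt (CyclicWord.rot n w i) (CyclicWord.rot n w (i + 1)) ↔
        w i = false := by
  intro i
  obtain ⟨k, hagree, hne⟩ := exists_forall_lt_eq_and_ne (hw.rot_ne_rot_add_one hn i)
  rw [lexLt_iff_of_forall_lt_eq hagree hne, Bool.lt_iff_eq_false_of_ne hne,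
    rot_eq_self_of_forall_lt_eq_rot_add_one hagree]
end

section
/- Let n ≥ 1 and let w : ℤ/nℤ → {L, R} be an aperiodic cyclic word, with rotations compared lexicographically using L < R. If i, j ∈ ℤ/nℤ satisfy w(i) = w(j) and rot_i(w) is lexicographically smaller than rot_j(w), then rot_{i+1}(w) is lexicographically smaller than rot_{j+1}(w). That is, the cyclic shift preserves the lexicographic order among rotations beginning with the same letter. -/
/-! Since the rotations at `i` and `j` begin with the same letter, their first difference is at
some position `k + 1`; the rotations at `i + 1` and `j + 1` are the same words with that first
letter dropped, so they first differ at position `k`, in the same direction. -/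

namespace CyclicWord

theorem rot_add_one_apply (n : ℕ) (w : ZMod n → Bool) (x : ZMod n) {m : ℕ} (h : m + 1 < n) :
    rot n w (x + 1) ⟨m, by omega⟩ = rot n w x ⟨m + 1, h⟩ := by
  simp only [rot]
  push_cast
  ring_nf

theorem lexLt_of_lexLt_of_head_eq {n : ℕ} {a b a' b' : Fin n → Bool}
    (ha : ∀ m (h : m + 1 < n), a' ⟨m, by omega⟩ = a ⟨m + 1, h⟩)
    (hb : ∀ m (h : m + 1 < n), b' ⟨m, by omega⟩ = b ⟨m + 1, h⟩)
    (hhead : ∀ h : 0 < n, a ⟨0, h⟩ = b ⟨0, h⟩) (hab : lexLt a b) : lexLt a' b' := by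
  obtain ⟨⟨_ | k, hk⟩, hagree, hlt⟩ := hab
  · exact absurd (hhead hk) hlt.ne
  refine ⟨⟨k, by omega⟩, fun j hj => ?_, ?_⟩
  · rw [ha j (by omega), hb j (by omega)]
    exact hagree _ (Fin.mk_lt_mk.mpr (Nat.succ_lt_succ hj))
  · rw [ha k hk, hb k hk]
    exact hlt

end CyclicWord

theorem CyclicWord.rot_succ_lexLt_of_lexLt_general (n : ℕ)
    (w : ZMod n → Bool) :
    ∀ i j : ZMod n, w i = w j →
      CyclicWord.lexLt (CyclicWord.rot n w i) (CyclicWord.rot n w j) →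
      CyclicWord.lexLt (CyclicWord.rot n w (i + 1)) (CyclicWord.rot n w (j + 1)) := by
  intro i j hij
  exact lexLt_of_lexLt_of_head_eq (fun _ h => rot_add_one_apply n w i h)
    (fun _ h => rot_add_one_apply n w j h) (fun _ => by simpa [rot] using hij)

/-- For an aperiodic binary cyclic word `w` of length `n ≥ 1`: if positions `i`
and `j` carry the same letter and the rotation at `i` is lexicographically
smaller than the rotation at `j`, then the rotation at `i + 1` is
lexicographically smaller than the rotation at `j + 1`.  That is, the cyclic
shift preserves the lexicographic order among rotations beginning with the same
letter. -/
theorem CyclicWord.rot_succ_lexLt_of_lexLt (n : ℕ) (hn : 1 ≤ n)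
    (w : ZMod n → Bool) (hw : CyclicWord.Aperiodic n w) :
    ∀ i j : ZMod n, w i = w j →
      CyclicWord.lexLt (CyclicWord.rot n w i) (CyclicWord.rot n w j) →
      CyclicWord.lexLt (CyclicWord.rot n w (i + 1)) (CyclicWord.rot n w (j + 1)) :=
  CyclicWord.rot_succ_lexLt_of_lexLt_general n w
end
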